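/- arXiv:2311.12453 — 6 statements merged into one kernel-verified Lean document; each statement's English description precedes it below -/
import Mathlib

section
/- Let p ∈ (0,1), q = 1 − p, and let x > 1. Consider the function a ↦ a·x − ln( p e^a / (1 − q e^a) ) defined for a ∈ (−∞, −ln q). Its supremum over this interval equals (x−1)·ln((x−1)/(x q)) − ln(p x); the supremum is attained at a* = ln((x−1)/(x q)) (which satisfies a* < −ln q), and its value is nonnegative. -/
/-!
On `a < -log q` the objective is `a (x - 1) + log (1 - q e^a) - log p`. Comparing it with its
value at `a*`, where `q e^{a*} = (x - 1) / x`, the difference is `w log u + log v` with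
`w = x - 1`, `u = e^{a - a*}`, `v = x (1 - q e^a)` and `w u + v = w + 1`; two applications of
`log t ≤ t - 1` show it is nonpositive. The value is nonnegative because the objective vanishes at
`a = 0`, the cumulant generating function of a probability distribution being `0` there.
-/

open Real

lemma mul_exp_lt_one_iff {q : ℝ} (hq : 0 < q) (a : ℝ) : q * exp a < 1 ↔ a < -log q := by
  rw [← log_inv, lt_log_iff_exp_lt (inv_pos.2 hq), ← lt_div_iff₀' hq, one_div]

lemma mul_log_add_log_nonpos {w u v : ℝ} (hw : 0 ≤ w) (hu : 0 < u) (hv : 0 < v)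
    (h : w * u + v = w + 1) : w * log u + log v ≤ 0 := by
  have hlog_u : w * log u ≤ w * (u - 1) := mul_le_mul_of_nonneg_left (log_le_sub_one_of_pos hu) hw
  have hlog_v : log v ≤ v - 1 := log_le_sub_one_of_pos hv
  linarith

lemma log_mul_exp_div_one_sub_mul_exp {p q a : ℝ} (hp : 0 < p) (ha : q * exp a < 1) :
    log (p * exp a / (1 - q * exp a)) = a + log p - log (1 - q * exp a) := by
  rw [log_div (by positivity) (by linarith), log_mul hp.ne' (exp_ne_zero a), log_exp]
  ring

section Maximizer

variable {q x : ℝ}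

lemma mul_exp_log_div (hq : 0 < q) (hx : 1 < x) :
    q * exp (log ((x - 1) / (x * q))) = (x - 1) / x := by
  rw [exp_log (div_pos (by linarith) (by positivity))]
  field_simp

lemma log_div_lt_neg_log (hq : 0 < q) (hx : 1 < x) : log ((x - 1) / (x * q)) < -log q := by
  rw [← mul_exp_lt_one_iff hq, mul_exp_log_div hq hx, div_lt_one (by linarith)]
  linarith

lemma mul_sub_one_add_log_one_sub_mul_exp_le (hq : 0 < q) (hx : 1 < x) {a : ℝ}
    (ha : q * exp a < 1) :
    a * (x - 1) + log (1 - q * exp a) ≤ log ((x - 1) / (x * q)) * (x - 1) - log x := by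
  set b := log ((x - 1) / (x * q))
  have hb : q * exp b = (x - 1) / x := mul_exp_log_div hq hx
  have hsum : (x - 1) * exp (a - b) + x * (1 - q * exp a) = x - 1 + 1 := by
    have hexp : q * exp a = exp (a - b) * (q * exp b) := by
      rw [mul_left_comm, ← exp_add, sub_add_cancel]
    rw [hexp, hb]
    field_simp
    ring
  have key := mul_log_add_log_nonpos (by linarith) (exp_pos _) (by nlinarith) hsum
  rw [log_exp, log_mul (by positivity) (by linarith)] at key
  linarith

lemma mul_sub_one_add_log_one_sub_mul_exp_log_div (hq : 0 < q) (hx : 1 < x) :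
    log ((x - 1) / (x * q)) * (x - 1) + log (1 - q * exp (log ((x - 1) / (x * q)))) =
      log ((x - 1) / (x * q)) * (x - 1) - log x := by
  have hx0 : x ≠ 0 := by positivity
  rw [mul_exp_log_div hq hx, show 1 - (x - 1) / x = x⁻¹ by field_simp; ring, log_inv, ← sub_eq_add_neg]

end Maximizer

/-- Legendre transform of the cumulant generating function of the
geometric distribution with parameter `p`, evaluated at `x > 1`. -/
theorem geometric_legendre_transform
    (p q : ℝ) (hp : p ∈ Set.Ioo (0:ℝ) 1) (hq : q = 1 - p)
    (x : ℝ) (hx : 1 < x)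
    (f : ℝ → ℝ)
    (hf : ∀ a, f a = a * x - Real.log (p * Real.exp a / (1 - q * Real.exp a)))
    (astar : ℝ) (hastar : astar = Real.log ((x - 1) / (x * q))) :
    astar < -Real.log q ∧
    IsGreatest (f '' Set.Iio (-Real.log q))
      ((x - 1) * Real.log ((x - 1) / (x * q)) - Real.log (p * x)) ∧
    f astar = (x - 1) * Real.log ((x - 1) / (x * q)) - Real.log (p * x) ∧
    0 ≤ (x - 1) * Real.log ((x - 1) / (x * q)) - Real.log (p * x) := by
  obtain ⟨hp0, hp1⟩ := hp
  have hq0 : 0 < q := by linarith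
  have hf_eq : ∀ a < -log q, f a = a * (x - 1) + log (1 - q * exp a) - log p := fun a ha => by
    rw [hf, log_mul_exp_div_one_sub_mul_exp hp0 ((mul_exp_lt_one_iff hq0 a).2 ha)]
    ring
  have hlt : astar < -log q := hastar ▸ log_div_lt_neg_log hq0 hx
  have hvalue : f astar = (x - 1) * log ((x - 1) / (x * q)) - log (p * x) := by
    rw [hf_eq astar hlt, hastar, mul_sub_one_add_log_one_sub_mul_exp_log_div hq0 hx,
      log_mul hp0.ne' (by positivity)]
    ring
  have hbound : ∀ a < -log q, f a ≤ (x - 1) * log ((x - 1) / (x * q)) - log (p * x) := by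
    intro a ha
    have := mul_sub_one_add_log_one_sub_mul_exp_le hq0 hx ((mul_exp_lt_one_iff hq0 a).2 ha)
    rw [hf_eq a ha, log_mul hp0.ne' (by positivity)]
    linarith
  have hzero_mem : 0 < -log q := neg_pos.2 (log_neg hq0 (by linarith))
  have hf_zero : f 0 = 0 := by
    rw [hf, exp_zero, mul_one, mul_one, hq, sub_sub_cancel, div_self hp0.ne', log_one]
    ring
  refine ⟨hlt, ⟨⟨astar, hlt, hvalue⟩, ?_⟩, hvalue, hf_zero ▸ hbound 0 hzero_mem⟩
  rintro _ ⟨a, ha, rfl⟩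
  exact hbound a ha
end

section
/- For θ ∈ (0,2) set p_θ = e^{−θ}, q_θ = 1 − e^{−θ}, x_θ = 1/(1 − θ/2), and F(θ) = (x_θ − 1)·ln((x_θ − 1)/(x_θ q_θ)) − ln(p_θ x_θ). Then F(θ) = ((1 − ln 2)/2)·θ + o(θ) as θ → 0⁺; that is, (F(θ) − ((1 − ln 2)/2)θ)/θ tends to 0 as θ tends to 0 from the right. -/
/-!
With `x = 1/(1 - θ/2)` one has `x - 1 = θ/(2 - θ)` and `(x - 1)/x = θ/2`, so
`F θ / θ = log (θ / (2 (1 - e^{-θ}))) / (2 - θ) + 1 + log (1 - θ/2) / θ`.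
As `θ → 0⁺` the three terms tend to `log (1/2) / 2`, `1` and `-1/2`, the derivative
of `log (1 - θ/2)` at `0`.
-/

open Real Filter Topology

lemma tendsto_div_nhdsGT_zero_of_hasDerivAt {f : ℝ → ℝ} {f' : ℝ}
    (hf : HasDerivAt f f' 0) (hf0 : f 0 = 0) :
    Tendsto (fun t => f t / t) (𝓝[>] 0) (𝓝 f') := by
  refine hf.tendsto_slope_zero_right.congr fun t => ?_
  simp [hf0, div_eq_inv_mul]

lemma tendsto_div_two_mul_one_sub_exp_neg :
    Tendsto (fun θ : ℝ => θ / (2 * (1 - exp (-θ)))) (𝓝[>] 0) (𝓝 (1 / 2)) := by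
  have hderiv : HasDerivAt (fun θ : ℝ => 1 - exp (-θ)) 1 0 := by
    simpa using ((hasDerivAt_neg (0 : ℝ)).exp).const_sub 1
  have hslope := ((tendsto_div_nhdsGT_zero_of_hasDerivAt hderiv (by simp)).inv₀
    one_ne_zero).const_mul (1 / 2)
  rw [inv_one, mul_one] at hslope
  refine hslope.congr fun θ => ?_
  rw [inv_div, one_div_mul_eq_div, div_div, mul_comm]

lemma tendsto_log_one_sub_half_div :
    Tendsto (fun θ : ℝ => log (1 - θ / 2) / θ) (𝓝[>] 0) (𝓝 (-(1 / 2))) := by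
  have hderiv : HasDerivAt (fun θ : ℝ => log (1 - θ / 2)) (-(1 / 2)) 0 := by
    have hlin : HasDerivAt (fun θ : ℝ => 1 - θ / 2) (-(1 / 2)) 0 := by
      simpa using ((hasDerivAt_id (0 : ℝ)).div_const 2).const_sub 1
    simpa using hlin.log (by norm_num)
  exact tendsto_div_nhdsGT_zero_of_hasDerivAt hderiv (by simp)

lemma legendre_geometric_eq {θ : ℝ} (hθ : θ ≠ 2) (q : ℝ) :
    (1 / (1 - θ / 2) - 1) * log ((1 / (1 - θ / 2) - 1) / (1 / (1 - θ / 2) * q))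
        - log (exp (-θ) * (1 / (1 - θ / 2)))
      = θ / (2 - θ) * log (θ / (2 * q)) + θ + log (1 - θ / 2) := by
  have h2θ : 2 - θ ≠ 0 := sub_ne_zero.mpr (Ne.symm hθ)
  have hhalf : 1 - θ / 2 ≠ 0 := by contrapose! h2θ; linarith
  have hx : 1 / (1 - θ / 2) - 1 = θ / (2 - θ) := by field_simp; ring
  have hratio : θ / (2 - θ) / (1 / (1 - θ / 2) * q) = θ / (2 * q) := by
    field_simp
  rw [hx, hratio, log_mul (exp_ne_zero _) (by simpa using hhalf), log_exp, one_div, log_inv]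
  ring

/-- first-order expansion of `θ ↦ Λ*_{e^{-θ}}(1/(1-θ/2))` at `0⁺`. -/
theorem legendre_geometric_expansion
    (F : ℝ → ℝ)
    (hF : ∀ θ ∈ Set.Ioo (0:ℝ) 2,
      F θ = (1/(1 - θ/2) - 1) *
          Real.log ((1/(1 - θ/2) - 1) / ((1/(1 - θ/2)) * (1 - Real.exp (-θ))))
        - Real.log (Real.exp (-θ) * (1/(1 - θ/2)))) :
    Tendsto (fun θ => (F θ - ((1 - Real.log 2)/2) * θ) / θ)
      (nhdsWithin 0 (Set.Ioi 0)) (nhds 0) := by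
  have hlog : Tendsto (fun θ : ℝ => log (θ / (2 * (1 - exp (-θ)))) / (2 - θ)) (𝓝[>] 0)
      (𝓝 (log (1 / 2) / (2 - 0))) :=
    ((continuousAt_log (by norm_num)).tendsto.comp tendsto_div_two_mul_one_sub_exp_neg).div
      (tendsto_const_nhds.sub (tendsto_id.mono_left nhdsWithin_le_nhds)) (by norm_num)
  have hlim := ((hlog.add_const 1).add tendsto_log_one_sub_half_div).sub_const
    ((1 - log 2) / 2)
  rw [one_div, log_inv, show -log 2 / (2 - 0) + 1 + -2⁻¹ - (1 - log 2) / 2 = 0 by ring] at hlim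
  refine hlim.congr' ?_
  filter_upwards [Ioo_mem_nhdsGT (show (0 : ℝ) < 2 by norm_num)] with θ ⟨hθ0, hθ2⟩
  rw [hF θ ⟨hθ0, hθ2⟩, legendre_geometric_eq hθ2.ne]
  field_simp
end

section
/- Let p ∈ (0,1), let G_1, …, G_n (n ≥ 1) be independent identically distributed random variables with the geometric distribution on {1,2,…} with parameter p, and let x ∈ (1, 1/p). Then P( ∑_{k=1}^n G_k < n·x ) ≤ exp( −n·Λ*_p(x) ), where Λ*_p(x) = (x−1)·ln((x−1)/(x(1−p))) − ln(p x). -/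
/-!
Chernoff's method for the lower tail: for `t ≤ 0`, independence gives
`P(∑ G_k ≤ n x) ≤ (e^{-t x} 𝔼 e^{t G})^n`, and `𝔼 e^{t G} = p e^t / (1 - (1 - p) e^t)`.
The tilt `e^t = (x - 1) / (x (1 - p))`, which lies in `(0, 1)` exactly when `1 < x < 1 / p`, is the
optimiser in the Legendre transform and turns `e^{-t x} 𝔼 e^{t G}` into `e^{-Λ*_p(x)}`.
-/

open MeasureTheory ProbabilityTheory Real

section NatValued

variable {Ω : Type*} [MeasurableSpace Ω] {μ : Measure Ω} {G : Ω → ℕ}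

lemma integral_comp_nat_eq_tsum [IsFiniteMeasure μ] (hG : Measurable G) (f : ℕ → ℝ) :
    ∫ ω, f (G ω) ∂μ = ∑' k, μ.real {ω | G ω = k} * f k := by
  rw [← integral_map hG.aemeasurable measurable_from_nat.aestronglyMeasurable,
    ← (μ.map G).sum_smul_dirac, integral_sum_dirac fun _ => measure_ne_top _ _]
  simp only [smul_eq_mul, Measure.map_apply hG (measurableSet_singleton _)]
  rfl

/-- The geometric law on `{1, 2, …}`, unlike Mathlib's `geometricMeasure` on `{0, 1, …}`. -/
def HasGeometricLaw (μ : Measure Ω) (G : Ω → ℕ) (p : ℝ) : Prop :=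
  ∀ k : ℕ, 1 ≤ k → μ {ω | G ω = k} = ENNReal.ofReal (p * (1 - p) ^ (k - 1))

variable {p : ℝ}

lemma HasGeometricLaw.measureReal_succ (hlaw : HasGeometricLaw μ G p)
    (hp : p ∈ Set.Ioc 0 1) (k : ℕ) : μ.real {ω | G ω = k + 1} = p * (1 - p) ^ k := by
  rw [measureReal_def, hlaw (k + 1) (Nat.le_add_left 1 k), Nat.add_sub_cancel,
    ENNReal.toReal_ofReal (mul_nonneg hp.1.le (pow_nonneg (sub_nonneg.2 hp.2) k))]

lemma HasGeometricLaw.measureReal_eq_zero [IsProbabilityMeasure μ] (hlaw : HasGeometricLaw μ G p)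
    (hG : Measurable G) (hp : p ∈ Set.Ioc 0 1) : μ.real {ω | G ω = 0} = 0 := by
  have htotal := integral_comp_nat_eq_tsum (μ := μ) hG fun _ => 1
  have hgeom : HasSum (fun k : ℕ => p * (1 - p) ^ k) 1 := by
    have h := (hasSum_geometric_of_lt_one (sub_nonneg.2 hp.2) (by linarith [hp.1])).mul_left p
    rwa [sub_sub_cancel, mul_inv_cancel₀ hp.1.ne'] at h
  simp only [integral_const, probReal_univ, smul_eq_mul, mul_one] at htotal
  rw [tsum_eq_zero_add'] at htotal
  · simp only [hlaw.measureReal_succ hp, hgeom.tsum_eq] at htotal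
    linarith
  · simpa only [Nat.cast_succ, hlaw.measureReal_succ hp] using hgeom.summable

lemma HasGeometricLaw.mgf_eq [IsProbabilityMeasure μ] (hlaw : HasGeometricLaw μ G p)
    (hG : Measurable G) (hp : p ∈ Set.Ioc 0 1) {t : ℝ} (ht : (1 - p) * exp t < 1) :
    mgf (fun ω => (G ω : ℝ)) μ t = p * exp t / (1 - (1 - p) * exp t) := by
  have hterm : ∀ k : ℕ, μ.real {ω | G ω = k + 1} * exp (t * (k + 1 : ℕ))
      = p * exp t * ((1 - p) * exp t) ^ k := by
    intro k
    rw [hlaw.measureReal_succ hp, Nat.cast_succ, mul_add_one, exp_add,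
      mul_comm t, exp_nat_mul, mul_pow]
    ring
  have hq : 0 ≤ (1 - p) * exp t := mul_nonneg (sub_nonneg.2 hp.2) (exp_pos t).le
  rw [mgf, integral_comp_nat_eq_tsum hG fun k => exp (t * k), tsum_eq_zero_add',
    hlaw.measureReal_eq_zero hG hp, zero_mul, zero_add]
  · simp only [hterm, tsum_mul_left, tsum_geometric_of_lt_one hq ht, div_eq_mul_inv]
  · simpa only [hterm] using ((summable_geometric_of_lt_one hq ht).mul_left (p * exp t))

end NatValued

lemma ProbabilityTheory.iIndepFun.measureReal_sum_le_le_pow {Ω ι : Type*} [MeasurableSpace Ω]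
    {μ : Measure Ω} [Fintype ι] {X : ι → Ω → ℝ} (hindep : iIndepFun X μ)
    (hmeas : ∀ i, Measurable (X i)) {t m : ℝ} (ht : t ≤ 0) (hm : 0 < m)
    (hmgf : ∀ i, mgf (X i) μ t = m) (a : ℝ) :
    μ.real {ω | ∑ i, X i ω ≤ Fintype.card ι * a} ≤
      (exp (-t * a) * m) ^ Fintype.card ι := by
  have := hindep.isProbabilityMeasure
  have hint : ∀ i ∈ Finset.univ, Integrable (fun ω => exp (t * X i ω)) μ :=
    fun i _ => mgf_pos_iff.1 (hmgf i ▸ hm)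
  calc μ.real {ω | ∑ i, X i ω ≤ Fintype.card ι * a}
      = μ.real {ω | (∑ i, X i) ω ≤ Fintype.card ι * a} := by simp only [Finset.sum_apply]
    _ ≤ exp (-t * (Fintype.card ι * a)) * mgf (∑ i, X i) μ t :=
        measure_le_le_exp_mul_mgf _ ht (hindep.integrable_exp_mul_sum hmeas hint)
    _ = (exp (-t * a) * m) ^ Fintype.card ι := by
        rw [hindep.mgf_sum hmeas, Finset.prod_congr rfl fun i _ => hmgf i, Finset.prod_const,
          Finset.card_univ, mul_pow, ← exp_nat_mul]
        ring_nf

/-- The rate function `Λ*_p`. -/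
noncomputable def geometricRateFunction (p x : ℝ) : ℝ :=
  (x - 1) * log ((x - 1) / (x * (1 - p))) - log (p * x)

lemma exp_neg_mul_mul_geometric_mgf_eq {p x t : ℝ} (hp : p ∈ Set.Ioo 0 1) (hx : 0 < x)
    (ht : exp t = (x - 1) / (x * (1 - p))) :
    exp (-t * x) * (p * exp t / (1 - (1 - p) * exp t)) = exp (-geometricRateFunction p x) := by
  have h1p : 1 - p ≠ 0 := sub_ne_zero.2 hp.2.ne'
  have hdenom : 1 - (1 - p) * exp t = x⁻¹ := by
    rw [ht]
    field_simp
    ring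
  rw [geometricRateFunction, ← ht, log_exp, hdenom,
    show -((x - 1) * t - log (p * x)) = -t * x + t + log (p * x) by ring, exp_add, exp_add,
    exp_log (mul_pos hp.1 hx)]
  field_simp

lemma geometric_tilt_bounds {p x t : ℝ} (hp : p ∈ Set.Ioo 0 1) (hx : x ∈ Set.Ioo 1 (1 / p))
    (ht : exp t = (x - 1) / (x * (1 - p))) : t ≤ 0 ∧ (1 - p) * exp t < 1 := by
  obtain ⟨hp0, hp1⟩ := hp
  obtain ⟨hx1, hxp⟩ := hx
  have hpx : p * x < 1 := by rwa [lt_div_iff₀ hp0, mul_comm] at hxp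
  have hx0 : 0 < x := by linarith
  constructor
  · rw [← exp_le_one_iff, ht, div_le_one (mul_pos hx0 (by linarith))]
    linarith
  · rw [ht, show (1 - p) * ((x - 1) / (x * (1 - p))) = (x - 1) / x by field_simp,
      div_lt_one hx0]
    linarith

theorem geometric_cramer_bound_general
    {Ω : Type*} [MeasurableSpace Ω] (μ : Measure Ω) [IsProbabilityMeasure μ]
    (p : ℝ) (hp : p ∈ Set.Ioo (0:ℝ) 1)
    (n : ℕ)
    (G : Fin n → Ω → ℕ) (hGmeas : ∀ i, Measurable (G i))
    (hindep : iIndepFun G μ)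
    (hlaw : ∀ i, ∀ k : ℕ, 1 ≤ k →
      μ {ω | G i ω = k} = ENNReal.ofReal (p * (1 - p) ^ (k - 1)))
    (x : ℝ) (hx : x ∈ Set.Ioo 1 (1/p)) :
    μ {ω | (∑ i, (G i ω : ℝ)) < n * x}
      ≤ ENNReal.ofReal (Real.exp (-(n : ℝ) *
          ((x - 1) * Real.log ((x - 1) / (x * (1 - p))) - Real.log (p * x)))) := by
  have hx0 : 0 < x := by linarith [hx.1]
  set t := log ((x - 1) / (x * (1 - p)))
  have hexp : exp t = (x - 1) / (x * (1 - p)) :=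
    exp_log (div_pos (by linarith [hx.1]) (mul_pos hx0 (by linarith [hp.2])))
  obtain ⟨ht, hdom⟩ := geometric_tilt_bounds hp hx hexp
  have hmgf : ∀ i, mgf (fun ω => (G i ω : ℝ)) μ t = p * exp t / (1 - (1 - p) * exp t) :=
    fun i => HasGeometricLaw.mgf_eq (hlaw i) (hGmeas i) (Set.Ioo_subset_Ioc_self hp) hdom
  have hchernoff := (hindep.comp (fun _ k => (k : ℝ)) fun _ => measurable_from_nat)
    |>.measureReal_sum_le_le_pow (fun i => measurable_from_nat.comp (hGmeas i)) ht
      (div_pos (mul_pos hp.1 (exp_pos t)) (sub_pos.2 hdom)) hmgf x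
  rw [Fintype.card_fin, exp_neg_mul_mul_geometric_mgf_eq hp hx0 hexp, ← exp_nat_mul]
    at hchernoff
  calc μ {ω | (∑ i, (G i ω : ℝ)) < n * x}
      ≤ μ {ω | (∑ i, (G i ω : ℝ)) ≤ n * x} :=
        measure_mono (Set.ofPred_subset_ofPred.2 fun _ => le_of_lt)
    _ = ENNReal.ofReal (μ.real {ω | (∑ i, (G i ω : ℝ)) ≤ n * x}) :=
        (ofReal_measureReal (measure_ne_top _ _)).symm
    _ ≤ _ := ENNReal.ofReal_le_ofReal (hchernoff.trans_eq (by rw [neg_mul, ← mul_neg]; rfl))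

/-- Cramér-type lower-deviation bound for i.i.d. geometric random
variables. -/
theorem geometric_cramer_bound
    {Ω : Type*} [MeasurableSpace Ω] (μ : Measure Ω) [IsProbabilityMeasure μ]
    (p : ℝ) (hp : p ∈ Set.Ioo (0:ℝ) 1)
    (n : ℕ) (hn : 1 ≤ n)
    (G : Fin n → Ω → ℕ) (hGmeas : ∀ i, Measurable (G i))
    (hindep : iIndepFun G μ)
    (hlaw : ∀ i, ∀ k : ℕ, 1 ≤ k →
      μ {ω | G i ω = k} = ENNReal.ofReal (p * (1 - p) ^ (k - 1)))
    (x : ℝ) (hx : x ∈ Set.Ioo 1 (1/p)) :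
    μ {ω | (∑ i, (G i ω : ℝ)) < n * x}
      ≤ ENNReal.ofReal (Real.exp (-(n : ℝ) *
          ((x - 1) * Real.log ((x - 1) / (x * (1 - p))) - Real.log (p * x)))) :=
  geometric_cramer_bound_general μ p hp n G hGmeas hindep hlaw x hx
end

section
/- Let t > 0, set c = −ln(1 − e^{−t}), and let M_1, …, M_n (n ≥ 1) be independent identically distributed random variables with the geometric distribution on {1,2,…} with parameter e^{−t}. Then for every natural number K ≥ 1, E[ (∑_{i=1}^n M_i + 1) · 1_{∃ i ≤ n : M_i > K} ] ≤ n e^{−cK} + n(K+2) e^{t} e^{−cK} + n(n−1) e^{t} e^{−cK}. -/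
open MeasureTheory ProbabilityTheory Real
open scoped ENNReal

/-!
Put `q = 1 - e^{-t}`, so that `e^{-cK} = q^K`. For a geometric `M` one has `P(M > K) = q^K` and,
by memorylessness, `E[M; M > K] = q^K (K + E M) = q^K (K + e^t) ≤ q^K (K + 2) e^t`. By the union
bound the expectation is at most `∑_i E[∑_j M_j + 1; M_i > K]`, and for `j ≠ i` independence gives
`E[M_j; M_i > K] = P(M_i > K) E[M_j] = q^K e^t`; summing over `i` and `j` gives the bound.
-/

section GeometricSeries

variable {p : ℝ}

theorem hasSum_geometric_tail (hp₀ : 0 < p) (hp₁ : p ≤ 1) (K : ℕ) :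
    HasSum (fun k : ℕ => p * (1 - p) ^ (k + K)) ((1 - p) ^ K) := by
  have h := (hasSum_geometric_of_lt_one (sub_nonneg.2 hp₁) (by linarith)).mul_left
    (p * (1 - p) ^ K)
  rw [sub_sub_cancel, mul_right_comm, mul_inv_cancel₀ hp₀.ne', one_mul] at h
  exact h.congr_fun fun k => by ring

theorem hasSum_succ_mul_geometric_tail (hp₀ : 0 < p) (hp₁ : p ≤ 1) (K : ℕ) :
    HasSum (fun k : ℕ => ((k + K + 1 : ℕ) : ℝ) * (p * (1 - p) ^ (k + K)))
      ((1 - p) ^ K * (K + p⁻¹)) := by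
  have hq : ‖1 - p‖ < 1 := by rw [Real.norm_of_nonneg (sub_nonneg.2 hp₁)]; linarith
  have h := ((hasSum_coe_mul_geometric_of_norm_lt_one hq).mul_left (p * (1 - p) ^ K)).add
    ((hasSum_geometric_of_lt_one (sub_nonneg.2 hp₁) (by linarith)).mul_left
      (p * (1 - p) ^ K * (K + 1)))
  have hsum : p * (1 - p) ^ K * ((1 - p) / (1 - (1 - p)) ^ 2)
      + p * (1 - p) ^ K * (K + 1) * (1 - (1 - p))⁻¹ = (1 - p) ^ K * (K + p⁻¹) := by
    rw [sub_sub_cancel]; field_simp; ring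
  rw [hsum] at h
  exact h.congr_fun fun k => by push_cast; ring

end GeometricSeries

section NatValued

variable {Ω : Type*} [MeasurableSpace Ω] {μ : Measure Ω} {X : Ω → ℕ}

theorem lintegral_comp_nat_eq_tsum (hX : Measurable X) (g : ℕ → ℝ≥0∞) :
    ∫⁻ ω, g (X ω) ∂μ = ∑' k, g k * μ {ω | X ω = k} := by
  rw [← lintegral_map measurable_from_nat hX, lintegral_countable']
  congr! 3 with k
  exact Measure.map_apply hX (measurableSet_singleton k)

theorem setLIntegral_lt_comp_eq_tsum (hX : Measurable X) (K : ℕ) (g : ℕ → ℝ≥0∞) :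
    ∫⁻ ω in {ω | K < X ω}, g (X ω) ∂μ
      = ∑' k : ℕ, g (k + K + 1) * μ {ω | X ω = k + K + 1} := by
  have h := lintegral_comp_nat_eq_tsum hX ({k | K < k}.indicator g) (μ := μ)
  rw [← ENNReal.summable.sum_add_tsum_nat_add' (k := K + 1), Finset.sum_eq_zero, zero_add] at h
  · rw [← lintegral_indicator (measurableSet_lt measurable_const hX)]
    refine h.trans (tsum_congr fun k => ?_)
    rw [Set.indicator_of_mem (by simp only [Set.mem_ofPred_eq]; omega), add_assoc]
  · intro k hk
    have : ¬ K < k := by simpa [Nat.lt_succ_iff] using hk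
    simp [this]

variable {p : ℝ} (hX : Measurable X)
  (hlaw : ∀ k : ℕ, 1 ≤ k → μ {ω | X ω = k} = ENNReal.ofReal (p * (1 - p) ^ (k - 1)))
include hX hlaw

theorem setLIntegral_lt_comp_eq_tsum_of_geometric (K : ℕ) (g : ℕ → ℝ≥0∞) :
    ∫⁻ ω in {ω | K < X ω}, g (X ω) ∂μ
      = ∑' k : ℕ, g (k + K + 1) * ENNReal.ofReal (p * (1 - p) ^ (k + K)) := by
  rw [setLIntegral_lt_comp_eq_tsum hX]
  congr! 2 with k
  rw [hlaw (k + K + 1) (by omega), Nat.add_sub_cancel]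

variable (hp₀ : 0 < p) (hp₁ : p ≤ 1)
include hp₀ hp₁

theorem measure_lt_eq_of_geometric (K : ℕ) :
    μ {ω | K < X ω} = ENNReal.ofReal ((1 - p) ^ K) := by
  rw [← setLIntegral_one, setLIntegral_lt_comp_eq_tsum_of_geometric hX hlaw K (fun _ => 1)]
  simp only [one_mul]
  rw [← ENNReal.ofReal_tsum_of_nonneg (fun k => by positivity)
    (hasSum_geometric_tail hp₀ hp₁ K).summable, (hasSum_geometric_tail hp₀ hp₁ K).tsum_eq]

theorem setLIntegral_lt_eq_of_geometric (K : ℕ) :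
    ∫⁻ ω in {ω | K < X ω}, (X ω : ℝ≥0∞) ∂μ = ENNReal.ofReal ((1 - p) ^ K * (K + p⁻¹)) := by
  have h := hasSum_succ_mul_geometric_tail hp₀ hp₁ K
  rw [setLIntegral_lt_comp_eq_tsum_of_geometric hX hlaw K (fun k => k), ← h.tsum_eq,
    ENNReal.ofReal_tsum_of_nonneg (fun k => by positivity) h.summable]
  refine tsum_congr fun k => ?_
  rw [ENNReal.ofReal_mul (Nat.cast_nonneg _), ENNReal.ofReal_natCast]

theorem lintegral_eq_inv_of_geometric : ∫⁻ ω, (X ω : ℝ≥0∞) ∂μ = ENNReal.ofReal p⁻¹ := by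
  rw [← setLIntegral_eq_of_support_subset (s := {ω | 0 < X ω}) (fun ω hω => ?_),
    setLIntegral_lt_eq_of_geometric hX hlaw hp₀ hp₁ 0]
  · simp
  · simpa [Nat.pos_iff_ne_zero] using hω

end NatValued

theorem ProbabilityTheory.IndepFun.setLIntegral_preimage_eq_measure_mul_lintegral
    {Ω β γ : Type*} [MeasurableSpace Ω] [MeasurableSpace β] [MeasurableSpace γ]
    {μ : Measure Ω} {X : Ω → β} {Y : Ω → γ}
    (hXY : IndepFun X Y μ) (hX : Measurable X) (hY : Measurable Y) {s : Set β}
    (hs : MeasurableSet s) {f : γ → ℝ≥0∞} (hf : Measurable f) :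
    ∫⁻ ω in X ⁻¹' s, f (Y ω) ∂μ = μ (X ⁻¹' s) * ∫⁻ ω, f (Y ω) ∂μ := by
  have h := lintegral_mul_eq_lintegral_mul_lintegral_of_indepFun''
    ((measurable_one.indicator hs).comp hX).aemeasurable (hf.comp hY).aemeasurable
    (hXY.comp (measurable_one.indicator hs) hf)
  have h_ind : (X ⁻¹' s).indicator (fun ω => f (Y ω))
      = fun ω => s.indicator 1 (X ω) * f (Y ω) := by
    ext ω; by_cases hω : X ω ∈ s <;> simp [hω]
  rw [← lintegral_indicator (hX hs), h_ind]
  refine h.trans ?_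
  rw [← lintegral_indicator_one (hX hs)]
  rfl

section Family

variable {Ω : Type*} [MeasurableSpace Ω] {μ : Measure Ω} {p : ℝ} (hp₀ : 0 < p) (hp₁ : p ≤ 1)
include hp₀ hp₁

theorem setLIntegral_lt_le_of_geometric {X : Ω → ℕ} (hX : Measurable X)
    (hlaw : ∀ k : ℕ, 1 ≤ k → μ {ω | X ω = k} = ENNReal.ofReal (p * (1 - p) ^ (k - 1))) (K : ℕ) :
    ∫⁻ ω in {ω | K < X ω}, (X ω : ℝ≥0∞) ∂μ ≤ ENNReal.ofReal ((1 - p) ^ K * p⁻¹ * (K + 2)) := by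
  rw [setLIntegral_lt_eq_of_geometric hX hlaw hp₀ hp₁, mul_assoc]
  have : 1 ≤ p⁻¹ := (one_le_inv₀ hp₀).2 hp₁
  gcongr
  nlinarith [(K.cast_nonneg : (0 : ℝ) ≤ K)]

theorem setLIntegral_lt_eq_of_indepFun_geometric {X Y : Ω → ℕ} (hXY : IndepFun X Y μ)
    (hX : Measurable X) (hY : Measurable Y)
    (hlawX : ∀ k : ℕ, 1 ≤ k → μ {ω | X ω = k} = ENNReal.ofReal (p * (1 - p) ^ (k - 1)))
    (hlawY : ∀ k : ℕ, 1 ≤ k → μ {ω | Y ω = k} = ENNReal.ofReal (p * (1 - p) ^ (k - 1)))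
    (K : ℕ) :
    ∫⁻ ω in {ω | K < X ω}, (Y ω : ℝ≥0∞) ∂μ = ENNReal.ofReal ((1 - p) ^ K * p⁻¹) := by
  rw [ENNReal.ofReal_mul (by positivity), ← measure_lt_eq_of_geometric hX hlawX hp₀ hp₁,
    ← lintegral_eq_inv_of_geometric hY hlawY hp₀ hp₁]
  exact hXY.setLIntegral_preimage_eq_measure_mul_lintegral hX hY measurableSet_Ioi
    measurable_from_nat

variable {ι : Type*} [Fintype ι] {M : ι → Ω → ℕ} (hM : ∀ i, Measurable (M i))
  (hindep : iIndepFun M μ)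
  (hlaw : ∀ i, ∀ k : ℕ, 1 ≤ k → μ {ω | M i ω = k} = ENNReal.ofReal (p * (1 - p) ^ (k - 1)))
  (K : ℕ)
include hM hindep hlaw

theorem setLIntegral_lt_sum_add_one_le (i : ι) :
    ∫⁻ ω in {ω | K < M i ω}, (∑ j, (M j ω : ℝ≥0∞) + 1) ∂μ
      ≤ ENNReal.ofReal ((1 - p) ^ K * (1 + p⁻¹ * (Fintype.card ι + K + 1))) := by
  classical
  have hterm : ∀ j, ∫⁻ ω in {ω | K < M i ω}, (M j ω : ℝ≥0∞) ∂μ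
      ≤ ENNReal.ofReal ((1 - p) ^ K * p⁻¹ * (1 + if j = i then (K + 1 : ℝ) else 0)) := by
    intro j
    rcases eq_or_ne j i with rfl | hji
    · convert setLIntegral_lt_le_of_geometric hp₀ hp₁ (hM j) (hlaw j) K using 3
      simp only [if_pos]; ring
    · simp only [hji, if_false, add_zero, mul_one]
      exact (setLIntegral_lt_eq_of_indepFun_geometric hp₀ hp₁ (hindep.indepFun hji.symm)
        (hM i) (hM j) (hlaw i) (hlaw j) K).le
  calc ∫⁻ ω in {ω | K < M i ω}, (∑ j, (M j ω : ℝ≥0∞) + 1) ∂μ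
      = ∑ j, ∫⁻ ω in {ω | K < M i ω}, (M j ω : ℝ≥0∞) ∂μ + μ {ω | K < M i ω} := by
        rw [lintegral_add_right _ measurable_const, setLIntegral_one,
          lintegral_finsetSum _ fun j _ => by fun_prop]
    _ ≤ ∑ j, ENNReal.ofReal ((1 - p) ^ K * p⁻¹ * (1 + if j = i then (K + 1 : ℝ) else 0))
          + ENNReal.ofReal ((1 - p) ^ K) :=
        add_le_add (Finset.sum_le_sum fun j _ => hterm j)
          (measure_lt_eq_of_geometric (hM i) (hlaw i) hp₀ hp₁ K).le
    _ = ENNReal.ofReal ((1 - p) ^ K * (1 + p⁻¹ * (Fintype.card ι + K + 1))) := by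
        rw [← ENNReal.ofReal_sum_of_nonneg fun j _ => by positivity,
          ← ENNReal.ofReal_add (Finset.sum_nonneg fun j _ => by positivity) (by positivity)]
        congr 1
        simp [Finset.sum_add_distrib, ← Finset.mul_sum]
        ring

theorem setLIntegral_exists_lt_sum_add_one_le :
    ∫⁻ ω in {ω | ∃ i, K < M i ω}, (∑ j, (M j ω : ℝ≥0∞) + 1) ∂μ
      ≤ ENNReal.ofReal
          (Fintype.card ι * ((1 - p) ^ K * (1 + p⁻¹ * (Fintype.card ι + K + 1)))) := by
  rw [Set.ofPred_exists, ENNReal.ofReal_mul (Nat.cast_nonneg _), ENNReal.ofReal_natCast,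
    ← nsmul_eq_mul, ← Finset.card_univ, ← Finset.sum_const]
  exact (lintegral_iUnion_le _ _).trans <| (tsum_fintype _).trans_le <|
    Finset.sum_le_sum fun i _ => setLIntegral_lt_sum_add_one_le hp₀ hp₁ hM hindep hlaw K i

end Family

theorem geometric_sum_indicator_bound_general
    {Ω : Type*} [MeasurableSpace Ω] (μ : Measure Ω)
    (t : ℝ) (ht : 0 < t) (c : ℝ) (hc : c = -Real.log (1 - Real.exp (-t)))
    (n : ℕ)
    (M : Fin n → Ω → ℕ) (hMmeas : ∀ i, Measurable (M i))
    (hindep : iIndepFun M μ)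
    (hlaw : ∀ i, ∀ k : ℕ, 1 ≤ k →
      μ {ω | M i ω = k}
        = ENNReal.ofReal (Real.exp (-t) * (1 - Real.exp (-t)) ^ (k - 1)))
    (K : ℕ) :
    (∫ ω, ({ω | ∃ i, K < M i ω}).indicator
        (fun ω => (∑ i, (M i ω : ℝ)) + 1) ω ∂μ)
      ≤ (n : ℝ) * Real.exp (-(c * K))
        + (n : ℝ) * ((K : ℝ) + 2) * Real.exp t * Real.exp (-(c * K))
        + (n : ℝ) * ((n : ℝ) - 1) * Real.exp t * Real.exp (-(c * K)) := by
  set p := exp (-t)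
  have hp₀ : 0 < p := exp_pos _
  have hp₁ : p < 1 := exp_lt_one_iff.2 (neg_neg_of_pos ht)
  have hpinv : p⁻¹ = exp t := by simp only [p, exp_neg, inv_inv]
  have hcK : exp (-(c * K)) = (1 - p) ^ K := by
    rw [show -(c * K) = K * log (1 - p) by rw [hc]; ring, exp_nat_mul, exp_log (by linarith)]
  have hS : MeasurableSet {ω | ∃ i, K < M i ω} := by
    rw [Set.ofPred_exists]
    exact MeasurableSet.iUnion fun i => hMmeas i measurableSet_Ioi
  have hRHS : (n : ℝ) * exp (-(c * K)) + n * (K + 2) * exp t * exp (-(c * K))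
      + n * (n - 1) * exp t * exp (-(c * K)) = n * ((1 - p) ^ K * (1 + p⁻¹ * (n + K + 1))) := by
    rw [hcK, hpinv]; ring
  have hintegrand : ∀ ω, ENNReal.ofReal (∑ i, (M i ω : ℝ) + 1) = ∑ i, (M i ω : ℝ≥0∞) + 1 := by
    intro ω
    rw [ENNReal.ofReal_add (by positivity) zero_le_one,
      ENNReal.ofReal_sum_of_nonneg fun i _ => by positivity]
    simp
  rw [integral_indicator hS, integral_eq_lintegral_of_nonneg_ae
    (ae_of_all _ fun ω => by positivity) (by fun_prop), lintegral_congr hintegrand, hRHS]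
  refine ENNReal.toReal_le_of_le_ofReal (by positivity) ?_
  simpa only [Fintype.card_fin] using
    setLIntegral_exists_lt_sum_add_one_le hp₀ hp₁.le hMmeas hindep hlaw K

/-- bound on `E[(∑ M_i + 1) · 1_{∃ i, M_i > K}]` for i.i.d. geometric
random variables with parameter `e^{-t}`. -/
theorem geometric_sum_indicator_bound
    {Ω : Type*} [MeasurableSpace Ω] (μ : Measure Ω) [IsProbabilityMeasure μ]
    (t : ℝ) (ht : 0 < t) (c : ℝ) (hc : c = -Real.log (1 - Real.exp (-t)))
    (n : ℕ) (hn : 1 ≤ n)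
    (M : Fin n → Ω → ℕ) (hMmeas : ∀ i, Measurable (M i))
    (hindep : iIndepFun M μ)
    (hlaw : ∀ i, ∀ k : ℕ, 1 ≤ k →
      μ {ω | M i ω = k}
        = ENNReal.ofReal (Real.exp (-t) * (1 - Real.exp (-t)) ^ (k - 1)))
    (K : ℕ) (hK : 1 ≤ K) :
    (∫ ω, ({ω | ∃ i, K < M i ω}).indicator
        (fun ω => (∑ i, (M i ω : ℝ)) + 1) ω ∂μ)
      ≤ (n : ℝ) * Real.exp (-(c * K))
        + (n : ℝ) * ((K : ℝ) + 2) * Real.exp t * Real.exp (-(c * K))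
        + (n : ℝ) * ((n : ℝ) - 1) * Real.exp t * Real.exp (-(c * K)) :=
  geometric_sum_indicator_bound_general μ t ht c hc n M hMmeas hindep hlaw K
end

section
/- Let n ≥ 1, let M_1, …, M_n be natural numbers, let ε_1, …, ε_n ∈ {−1, +1}, and let χ_1, …, χ_n : ℝ → ℕ be nonincreasing right-continuous functions such that χ_i(r) ≤ M_i for all r ∈ ℝ and all i. Then the set of values { ∑_{i=1}^n ε_i χ_i(r) : r ∈ ℝ } ⊆ ℤ has cardinality at most ∑_{i=1}^n M_i + 1. -/
/-!
Since every `χ i` is nonincreasing, two points with the same total count `∑ i, χ i r` have the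
same count for each `i` separately (a sum of nonnegative decrements vanishes only if each
decrement does). So the signed sum is a function of the total count, which takes values in
`{0, …, ∑ i, M i}`.
-/

open Set

theorem Function.FactorsThrough.finite_range_and_ncard_range_le {α β γ : Type*} [Nonempty γ]
    {g : α → γ} {f : α → β} (hgf : g.FactorsThrough f) (hf : (range f).Finite) :
    (range g).Finite ∧ (range g).ncard ≤ (range f).ncard := by
  obtain ⟨e, rfl⟩ := (Function.factorsThrough_iff g).1 hgf
  rw [range_comp]
  exact ⟨hf.image e, ncard_image_le hf⟩

theorem Finset.factorsThrough_sum_of_antitone {ι α β γ : Type*} [LinearOrder α]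
    [AddCommMonoid β] [PartialOrder β] [IsOrderedCancelAddMonoid β] [AddCommMonoid γ]
    (s : Finset ι) {f : ι → α → β} (hf : ∀ i ∈ s, Antitone (f i)) (w : ι → β → γ) :
    (fun a => ∑ i ∈ s, w i (f i a)).FactorsThrough (fun a => ∑ i ∈ s, f i a) := by
  intro a b hab
  wlog hle : a ≤ b generalizing a b
  · exact (this hab.symm (le_of_not_ge hle)).symm
  have heq := (Finset.sum_eq_sum_iff_of_le fun i hi => hf i hi hle).1 hab.symm
  exact Finset.sum_congr rfl fun i hi => by rw [heq i hi]

theorem signed_sum_of_antitone_counts_finite_range_general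
    (n : ℕ) (M : Fin n → ℕ) (ε : Fin n → ℤ)
    (χ : Fin n → ℝ → ℕ)
    (hanti : ∀ i, Antitone (χ i))
    (hbd : ∀ i r, χ i r ≤ M i) :
    (Set.range fun r : ℝ => ∑ i, ε i * (χ i r : ℤ)).Finite ∧
    (Set.range fun r : ℝ => ∑ i, ε i * (χ i r : ℤ)).ncard ≤ (∑ i, M i) + 1 := by
  have hfac := Finset.univ.factorsThrough_sum_of_antitone (fun i _ => hanti i)
    fun i (k : ℕ) => ε i * (k : ℤ)
  have hsub : (range fun r => ∑ i, χ i r) ⊆ Iic (∑ i, M i) := by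
    rintro _ ⟨r, rfl⟩
    exact Finset.sum_le_sum fun i _ => hbd i r
  obtain ⟨hfin, hcard⟩ := hfac.finite_range_and_ncard_range_le ((finite_Iic _).subset hsub)
  refine ⟨hfin, hcard.trans ?_⟩
  simpa using ncard_le_ncard hsub (finite_Iic _)

/-- a signed sum of `n` nonincreasing right-continuous `ℕ`-valued
functions bounded by `M_i` takes at most `∑ M_i + 1` values on `ℝ`. -/
theorem signed_sum_of_antitone_counts_finite_range
    (n : ℕ) (hn : 1 ≤ n) (M : Fin n → ℕ) (ε : Fin n → ℤ)
    (hε : ∀ i, ε i = 1 ∨ ε i = -1)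
    (χ : Fin n → ℝ → ℕ)
    (hanti : ∀ i, Antitone (χ i))
    (hrc : ∀ i r, ContinuousWithinAt (χ i) (Set.Ici r) r)
    (hbd : ∀ i r, χ i r ≤ M i) :
    (Set.range fun r : ℝ => ∑ i, ε i * (χ i r : ℤ)).Finite ∧
    (Set.range fun r : ℝ => ∑ i, ε i * (χ i r : ℤ)).ncard ≤ (∑ i, M i) + 1 :=
  signed_sum_of_antitone_counts_finite_range_general n M ε χ hanti hbd
end

section
/- In the setup below, let T > 0 with t ∈ [0,T] (and t > 0), set C(t) = 2e^{2t} − e^{t} and c₃ = −ln(1 − e^{−T}), and assume in addition that lim_{r→−∞} G(r) = 1. For each i let S_i = sup_{r∈ℝ} χ_i(·)(r) (which equals the limit of χ_i(·)(r) as r → −∞, and is at most M_i), and let N_tot = ∑_{i=1}^n S_i. Then for every η > 0, every α ∈ (0, 1/2) and every integer n ≥ max( 8C(t)/η², 2 ), one has P( |N_tot − n| > nη ) ≤ 16 n² exp( − n^{1−2α} η² / 32 ) + 32 e^{T} n² exp( − c₃ n^{α} ). -/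
/-!
Each total `S i = ⨆ r, χ i · r` is dominated by the geometric population `M i`, so
`P(S i > j) ≤ (1 - e^{-t})^j`, and by monotone convergence `E[S i] = lim_{r → -∞} G r = 1`.
Truncate at `K = ⌈n^α⌉`: outside an event of probability at most `n (1 - e^{-t})^K` no `S i`
exceeds `K`, truncation lowers each mean by at most `(1 - e^{-t})^K e^t`, and Hoeffding's
inequality for the independent truncated totals, which take values in `[0, K]`, controls the
deviation of their sum. The second term of the bound is at least `1` unless that bias is
negligible against `n η`.
-/

open MeasureTheory ProbabilityTheory Real Filter
open scoped ENNReal NNReal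

lemma Antitone.iSup_eq_iSup_neg_natCast {γ : Type*} [ConditionallyCompleteLinearOrder γ]
    {h : ℝ → γ} (hh : Antitone h) : ⨆ r, h r = ⨆ k : ℕ, h (-k) :=
  (hh.ciSup_comp_tendsto_atBot_of_linearOrder
    (tendsto_neg_atBot_iff.mpr tendsto_natCast_atTop_atTop)).symm

section NatValued

variable {Ω : Type*} [MeasurableSpace Ω] {μ : Measure Ω}

lemma lintegral_natCast_eq_tsum_measure_lt {f : Ω → ℕ} (hf : Measurable f) :
    ∫⁻ ω, (f ω : ℝ≥0∞) ∂μ = ∑' j : ℕ, μ {ω | j < f ω} := by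
  have hset (j : ℕ) : MeasurableSet {ω | j < f ω} := measurableSet_lt measurable_const hf
  have hcount (ω : Ω) : (f ω : ℝ≥0∞) = ∑' j : ℕ, {ω | j < f ω}.indicator 1 ω := by
    rw [tsum_eq_sum (s := Finset.range (f ω)) fun j hj => by simp_all]
    simp only [Set.indicator_apply, Set.mem_ofPred_eq, Pi.one_apply]
    rw [Finset.sum_ite_of_true fun j hj => Finset.mem_range.1 hj]
    simp
  simp_rw [hcount]
  rw [lintegral_tsum fun j => (measurable_one.indicator (hset j)).aemeasurable]
  simp_rw [lintegral_indicator_one (hset _)]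

lemma lintegral_natCast_le_of_measure_lt_le_geometric {f : Ω → ℕ} (hf : Measurable f)
    {c q : ℝ} (hc : 0 ≤ c) (hq0 : 0 ≤ q) (hq1 : q < 1)
    (htail : ∀ j : ℕ, μ {ω | j < f ω} ≤ ENNReal.ofReal (c * q ^ j)) :
    ∫⁻ ω, (f ω : ℝ≥0∞) ∂μ ≤ ENNReal.ofReal (c * (1 - q)⁻¹) := by
  have hsum : Summable fun j : ℕ => c * q ^ j := (summable_geometric_of_lt_one hq0 hq1).mul_left c
  rw [lintegral_natCast_eq_tsum_measure_lt hf, ← tsum_geometric_of_lt_one hq0 hq1,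
    ← tsum_mul_left, ENNReal.ofReal_tsum_of_nonneg (fun j => by positivity) hsum]
  exact ENNReal.tsum_le_tsum htail

lemma integrable_natCast_of_lintegral_le {f : Ω → ℕ} (hf : Measurable f) {b : ℝ}
    (hb : ∫⁻ ω, (f ω : ℝ≥0∞) ∂μ ≤ ENNReal.ofReal b) : Integrable (fun ω => (f ω : ℝ)) μ := by
  refine ⟨(measurable_from_top.comp hf).aestronglyMeasurable, ?_⟩
  simp only [HasFiniteIntegral, enorm_natCast]
  exact hb.trans_lt ENNReal.ofReal_lt_top

lemma integral_natCast_le_of_lintegral_le {f : Ω → ℕ} (hf : Measurable f) {b : ℝ} (hb0 : 0 ≤ b)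
    (hb : ∫⁻ ω, (f ω : ℝ≥0∞) ∂μ ≤ ENNReal.ofReal b) : ∫ ω, (f ω : ℝ) ∂μ ≤ b := by
  rw [integral_eq_lintegral_of_nonneg_ae (f := fun ω => (f ω : ℝ))
    (ae_of_all _ fun ω => by positivity)
    (measurable_from_top.comp hf).aestronglyMeasurable]
  simp_rw [ENNReal.ofReal_natCast]
  exact ENNReal.toReal_le_of_le_ofReal hb0 hb

lemma integrable_natCast_of_measure_lt_le_geometric {f : Ω → ℕ} (hf : Measurable f) {q : ℝ}
    (hq0 : 0 ≤ q) (hq1 : q < 1) (htail : ∀ j : ℕ, μ {ω | j < f ω} ≤ ENNReal.ofReal (q ^ j)) :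
    Integrable (fun ω => (f ω : ℝ)) μ :=
  integrable_natCast_of_lintegral_le hf
    (lintegral_natCast_le_of_measure_lt_le_geometric hf zero_le_one hq0 hq1 (by simpa using htail))

lemma measure_lt_le_of_geometric [IsProbabilityMeasure μ] {f : Ω → ℕ} (hf : Measurable f)
    {p : ℝ} (hp0 : 0 ≤ p) (hp1 : p ≤ 1)
    (hlaw : ∀ k : ℕ, 1 ≤ k → μ {ω | f ω = k} = ENNReal.ofReal (p * (1 - p) ^ (k - 1)))
    (j : ℕ) : μ {ω | j < f ω} ≤ ENNReal.ofReal ((1 - p) ^ j) := by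
  have hpow : (1 - p) ^ j ≤ 1 := pow_le_one₀ (by linarith) (by linarith)
  have hlow : ENNReal.ofReal (1 - (1 - p) ^ j) ≤ μ {ω | j < f ω}ᶜ := calc
    ENNReal.ofReal (1 - (1 - p) ^ j) = ∑ k ∈ Finset.Ico 1 (j + 1), μ (f ⁻¹' {k}) := by
      rw [Finset.sum_Ico_eq_sum_range, add_tsub_cancel_right, ← geom_sum_mul_neg, sub_sub_cancel,
        Finset.sum_mul, ENNReal.ofReal_sum_of_nonneg fun k _ => by
          have : 0 ≤ 1 - p := by linarith
          positivity]
      refine Finset.sum_congr rfl fun k _ => ?_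
      rw [show f ⁻¹' {1 + k} = {ω | f ω = 1 + k} from rfl, hlaw _ (Nat.le_add_right 1 k),
        add_tsub_cancel_left, mul_comm]
    _ = μ (f ⁻¹' ↑(Finset.Ico 1 (j + 1))) :=
      sum_measure_preimage_singleton _ fun k _ => hf (measurableSet_singleton k)
    _ ≤ μ {ω | j < f ω}ᶜ := measure_mono fun ω hω => by
      simp only [Finset.coe_Ico, Set.mem_preimage, Set.mem_Ico] at hω
      exact fun h : j < f ω => by omega
  have hset : MeasurableSet {ω | j < f ω} := measurableSet_lt measurable_const hf
  calc μ {ω | j < f ω} = 1 - μ {ω | j < f ω}ᶜ := by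
        rw [prob_compl_eq_one_sub hset, ENNReal.sub_sub_cancel ENNReal.one_ne_top prob_le_one]
    _ ≤ 1 - ENNReal.ofReal (1 - (1 - p) ^ j) := tsub_le_tsub_left hlow 1
    _ = ENNReal.ofReal ((1 - p) ^ j) := by
      rw [← ENNReal.ofReal_one, ← ENNReal.ofReal_sub _ (by linarith), sub_sub_cancel]

lemma integral_natCast_iSup_neg_natCast_eq_of_tendsto_atBot {χ : Ω → ℝ → ℕ}
    (hχ : ∀ r, Measurable fun ω => χ ω r) (hanti : ∀ ω, Antitone (χ ω)) {g : Ω → ℕ}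
    (hg : Integrable (fun ω => (g ω : ℝ)) μ) (hχg : ∀ ω r, χ ω r ≤ g ω) {L : ℝ}
    (hL : Tendsto (fun r => ∫ ω, (χ ω r : ℝ) ∂μ) atBot (nhds L)) :
    ∫ ω, ((⨆ k : ℕ, χ ω (-k) : ℕ) : ℝ) ∂μ = L := by
  have hmono (ω : Ω) : Monotone fun k : ℕ => χ ω (-k) :=
    fun k l hkl => hanti ω (neg_le_neg (Nat.cast_le.2 hkl))
  refine tendsto_nhds_unique (tendsto_integral_of_dominated_convergence _
    (fun k => (measurable_from_top.comp (hχ _)).aestronglyMeasurable) hg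
    (fun k => ae_of_all _ fun ω => ?_) (ae_of_all _ fun ω => ?_))
    (hL.comp (tendsto_neg_atBot_iff.mpr tendsto_natCast_atTop_atTop))
  · simpa using hχg ω _
  · exact (continuous_of_discreteTopology.tendsto _).comp
      (tendsto_atTop_ciSup (hmono ω) ⟨g ω, by rintro _ ⟨k, rfl⟩; exact hχg ω _⟩)

end NatValued

section Hoeffding

variable {Ω : Type*} [MeasurableSpace Ω] {μ : Measure Ω} [IsProbabilityMeasure μ]

lemma measureReal_le_abs_sum_sub_integral_le {ι : Type*} [Fintype ι] {X : ι → Ω → ℝ}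
    (hX : ∀ i, Measurable (X i)) (hindep : iIndepFun X μ) {a b : ℝ}
    (hab : ∀ i ω, X i ω ∈ Set.Icc a b) {ε : ℝ} (hε : 0 ≤ ε) :
    μ.real {ω | ε ≤ |∑ i, (X i ω - μ[X i])|}
      ≤ 2 * exp (-2 * ε ^ 2 / (Fintype.card ι * (b - a) ^ 2)) := by
  have hsum : HasSubgaussianMGF (fun ω => ∑ i, (X i ω - μ[X i]))
      (∑ _i : ι, (‖b - a‖₊ / 2) ^ 2) μ :=
    HasSubgaussianMGF.sum_of_iIndepFun (X := fun i ω => X i ω - μ[X i])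
      (hindep.comp (fun i (y : ℝ) => y - ∫ ω, X i ω ∂μ) fun i => by fun_prop)
      fun i _ => hasSubgaussianMGF_of_mem_Icc (hX i).aemeasurable (ae_of_all _ (hab i))
  have hexp : -ε ^ 2 / (2 * ((∑ _i : ι, (‖b - a‖₊ / 2) ^ 2 : ℝ≥0) : ℝ))
      = -2 * ε ^ 2 / (Fintype.card ι * (b - a) ^ 2) := by
    simp only [Finset.sum_const, Finset.card_univ, nsmul_eq_mul, NNReal.coe_mul,
      NNReal.coe_natCast, NNReal.coe_pow, NNReal.coe_div, coe_nnnorm, Real.norm_eq_abs,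
      NNReal.coe_ofNat, div_pow, sq_abs]
    rw [show (2 : ℝ) * (Fintype.card ι * ((b - a) ^ 2 / 2 ^ 2))
      = Fintype.card ι * (b - a) ^ 2 / 2 by ring, div_div_eq_mul_div]
    ring
  calc μ.real {ω | ε ≤ |∑ i, (X i ω - μ[X i])|}
      ≤ μ.real ({ω | ε ≤ ∑ i, (X i ω - μ[X i])} ∪ {ω | ε ≤ (-fun ω => ∑ i, (X i ω - μ[X i])) ω}) :=
        measureReal_mono fun ω hω => by
          rcases le_abs'.1 (show ε ≤ _ from hω) with h | h
          · exact Or.inr (by simp only [Set.mem_ofPred_eq, Pi.neg_apply]; linarith)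
          · exact Or.inl h
    _ ≤ _ := measureReal_union_le _ _
    _ ≤ 2 * exp (-2 * ε ^ 2 / (Fintype.card ι * (b - a) ^ 2)) := by
      rw [two_mul, ← hexp]
      exact add_le_add (hsum.measure_ge_le hε) (hsum.neg.measure_ge_le hε)

end Hoeffding

section Truncation

variable {Ω : Type*} [MeasurableSpace Ω] {μ : Measure Ω}

lemma abs_integral_natCast_sub_integral_min_le {f : Ω → ℕ} (hf : Measurable f) {q : ℝ}
    (hq0 : 0 ≤ q) (hq1 : q < 1) (htail : ∀ j : ℕ, μ {ω | j < f ω} ≤ ENNReal.ofReal (q ^ j))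
    (K : ℕ) : |∫ ω, (f ω : ℝ) ∂μ - ∫ ω, ((min (f ω) K : ℕ) : ℝ) ∂μ| ≤ q ^ K * (1 - q)⁻¹ := by
  have hq : 0 ≤ q ^ K * (1 - q)⁻¹ := mul_nonneg (by positivity) (inv_nonneg.2 (by linarith))
  have hexcess : ∫⁻ ω, ((f ω - K : ℕ) : ℝ≥0∞) ∂μ ≤ ENNReal.ofReal (q ^ K * (1 - q)⁻¹) :=
    lintegral_natCast_le_of_measure_lt_le_geometric (hf.sub_const K) (by positivity) hq0 hq1
      fun j => (measure_mono fun ω (h : j < f ω - K) => (show K + j < f ω by omega)).trans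
        ((htail (K + j)).trans_eq (by rw [pow_add]))
  have hint : Integrable (fun ω => (f ω : ℝ)) μ :=
    integrable_natCast_of_measure_lt_le_geometric hf hq0 hq1 htail
  have hsplit : (fun ω => (f ω : ℝ)) = fun ω => ((min (f ω) K : ℕ) : ℝ) + ((f ω - K : ℕ) : ℝ) := by
    ext ω; rw [← Nat.cast_add]; congr 1; omega
  have hmin : Integrable (fun ω => ((min (f ω) K : ℕ) : ℝ)) μ :=
    hint.mono' (measurable_from_top.comp (hf.min measurable_const)).aestronglyMeasurable
      (ae_of_all _ fun ω => by simp [abs_of_nonneg])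
  rw [hsplit, integral_add hmin (integrable_natCast_of_lintegral_le (hf.sub_const K) hexcess),
    add_sub_cancel_left, abs_of_nonneg (integral_nonneg fun ω => by positivity)]
  exact integral_natCast_le_of_lintegral_le (hf.sub_const K) hq hexcess

theorem measure_abs_sum_sub_card_gt_le [IsProbabilityMeasure μ] {ι : Type*} [Fintype ι]
    {S : ι → Ω → ℕ} (hS : ∀ i, Measurable (S i)) (hindep : iIndepFun S μ) {q : ℝ} (hq0 : 0 ≤ q)
    (hq1 : q < 1) (htail : ∀ i (j : ℕ), μ {ω | j < S i ω} ≤ ENNReal.ofReal (q ^ j))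
    (hmean : ∀ i, ∫ ω, (S i ω : ℝ) ∂μ = 1) (K : ℕ) {s : ℝ}
    (hs : 2 * Fintype.card ι * (q ^ K * (1 - q)⁻¹) ≤ s) :
    μ {ω | s < |((∑ i, S i ω : ℕ) : ℝ) - Fintype.card ι|}
      ≤ ENNReal.ofReal (2 * exp (-s ^ 2 / (2 * Fintype.card ι * K ^ 2))
          + Fintype.card ι * q ^ K) := by
  set n := Fintype.card ι
  set Z : ι → Ω → ℝ := fun i ω => ((min (S i ω) K : ℕ) : ℝ) with hZ
  have hZmeas (i : ι) : Measurable (Z i) := measurable_from_top.comp ((hS i).min measurable_const)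
  have hZmean (i : ι) : |1 - μ[Z i]| ≤ q ^ K * (1 - q)⁻¹ :=
    hmean i ▸ abs_integral_natCast_sub_integral_min_le (hS i) hq0 hq1 (htail i) K
  have hs0 : 0 ≤ s := le_trans (by positivity) hs
  have hcover : {ω | s < |((∑ i, S i ω : ℕ) : ℝ) - n|}
      ⊆ {ω | s / 2 ≤ |∑ i, (Z i ω - μ[Z i])|} ∪ ⋃ i, {ω | K < S i ω} := by
    intro ω hω
    by_cases hK : ∀ i, S i ω ≤ K
    · left
      have hsplit : ((∑ i, S i ω : ℕ) : ℝ) - n = ∑ i, (Z i ω - μ[Z i]) - ∑ i, (1 - μ[Z i]) := by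
        simp only [hZ, min_eq_left (hK _), Nat.cast_sum, Finset.sum_sub_distrib, Finset.sum_const,
          Finset.card_univ, nsmul_eq_mul, mul_one, n]
        ring
      have herr : |∑ i, (1 - μ[Z i])| ≤ n * (q ^ K * (1 - q)⁻¹) :=
        (Finset.abs_sum_le_sum_abs _ _).trans <| by
          simpa using Finset.sum_le_sum fun i (_ : i ∈ Finset.univ) => hZmean i
      have htri := abs_sub (∑ i, (Z i ω - μ[Z i])) (∑ i, (1 - μ[Z i]))
      change s < |_| at hω
      rw [hsplit] at hω
      show s / 2 ≤ _
      linarith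
    · simp only [not_forall, not_le] at hK
      exact Or.inr (Set.mem_iUnion.2 hK)
  have hhoeffding : μ {ω | s / 2 ≤ |∑ i, (Z i ω - μ[Z i])|}
      ≤ ENNReal.ofReal (2 * exp (-s ^ 2 / (2 * n * K ^ 2))) := by
    rw [← ofReal_measureReal]
    refine ENNReal.ofReal_le_ofReal ((measureReal_le_abs_sum_sub_integral_le hZmeas
      (hindep.comp (fun _ k => ((min k K : ℕ) : ℝ)) fun _ => measurable_from_nat)
      (a := 0) (b := K) (fun i ω => ⟨by positivity, by simp [hZ]⟩) (by positivity)).trans_eq ?_)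
    simp only [n]
    ring_nf
  have hunion : μ (⋃ i, {ω | K < S i ω}) ≤ ENNReal.ofReal (n * q ^ K) := calc
    μ (⋃ i, {ω | K < S i ω}) ≤ ∑ i, μ {ω | K < S i ω} := measure_iUnion_fintype_le _ _
    _ ≤ ∑ _i : ι, ENNReal.ofReal (q ^ K) := Finset.sum_le_sum fun i _ => htail i K
    _ = ENNReal.ofReal (n * q ^ K) := by
      rw [Finset.sum_const, Finset.card_univ, nsmul_eq_mul, ENNReal.ofReal_mul (by positivity),
        ENNReal.ofReal_natCast]
  calc _ ≤ _ := measure_mono hcover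
    _ ≤ _ := measure_union_le _ _
    _ ≤ _ := add_le_add hhoeffding hunion
    _ = _ := (ENNReal.ofReal_add (by positivity) (by positivity)).symm

end Truncation

lemma one_sub_exp_neg_pow_ceil_mul_exp_le {t T x : ℝ} (ht : 0 < t) (htT : t ≤ T) :
    (1 - exp (-t)) ^ ⌈x⌉₊ * exp t ≤ exp T * exp (-(-log (1 - exp (-T)) * x)) := by
  have hQ0 : 0 < 1 - exp (-T) := sub_pos.2 (exp_lt_one_iff.2 (by linarith))
  have hQ1 : 1 - exp (-T) ≤ 1 := sub_le_self _ (exp_pos _).le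
  have hqQ : (1 - exp (-t)) ^ ⌈x⌉₊ ≤ (1 - exp (-T)) ^ ⌈x⌉₊ :=
    pow_le_pow_left₀ (sub_nonneg.2 (exp_le_one_iff.2 (by linarith))) (by gcongr) _
  have hQx : (1 - exp (-T)) ^ ⌈x⌉₊ ≤ exp (-(-log (1 - exp (-T)) * x)) := by
    rw [neg_mul, neg_neg, ← rpow_def_of_pos hQ0, ← rpow_natCast]
    exact rpow_le_rpow_of_exponent_ge hQ0 hQ1 (Nat.le_ceil x)
  rw [mul_comm (exp T)]
  exact mul_le_mul (hqQ.trans hQx) (exp_le_exp.2 htT) (exp_pos _).le (exp_pos _).le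

lemma rpow_one_sub_two_mul_mul_sq_div_le {x α η : ℝ} (hx : 1 ≤ x) (hα : 0 ≤ α) :
    x ^ (1 - 2 * α) * η ^ 2 / 32 ≤ (x * η) ^ 2 / (2 * x * (⌈x ^ α⌉₊ : ℝ) ^ 2) := by
  have hx0 : 0 < x := by linarith
  have hA : 1 ≤ x ^ α := one_le_rpow hx hα
  have hK : (⌈x ^ α⌉₊ : ℝ) ≤ 2 * x ^ α := by
    linarith [Nat.ceil_lt_add_one (zero_le_one.trans hA)]
  have hK0 : 0 < (⌈x ^ α⌉₊ : ℝ) := hA.trans_lt' one_pos |>.trans_le (Nat.le_ceil _)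
  have hsplit : x ^ (1 - 2 * α) * (x ^ α) ^ 2 = x := by
    rw [← rpow_natCast, ← rpow_mul hx0.le, ← rpow_add hx0]; ring_nf; exact rpow_one x
  rw [div_le_div_iff₀ (by norm_num) (by positivity)]
  have hK2 : (⌈x ^ α⌉₊ : ℝ) ^ 2 ≤ 4 * (x ^ α) ^ 2 := by nlinarith
  have hP : 0 ≤ x ^ (1 - 2 * α) * η ^ 2 := by positivity
  nlinarith [mul_le_mul_of_nonneg_left hK2 (mul_nonneg hP (by positivity : (0:ℝ) ≤ 2 * x))]

lemma exp_decay_add_tail_le {t T η α x : ℝ} (ht : 0 < t) (htT : t ≤ T) (hα : 0 ≤ α)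
    (hx : 2 ≤ x) :
    2 * exp (-(x * η) ^ 2 / (2 * x * (⌈x ^ α⌉₊ : ℝ) ^ 2)) + x * (1 - exp (-t)) ^ ⌈x ^ α⌉₊
      ≤ 16 * x ^ 2 * exp (-(x ^ (1 - 2 * α) * η ^ 2 / 32))
        + 32 * exp T * x ^ 2 * exp (-(-log (1 - exp (-T)) * x ^ α)) := by
  refine add_le_add ?_ ?_
  · have hdecay := exp_le_exp.2 <| neg_le_neg <|
      rpow_one_sub_two_mul_mul_sq_div_le (η := η) (by linarith : 1 ≤ x) hα
    rw [← neg_div] at hdecay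
    exact mul_le_mul (by nlinarith) hdecay (exp_pos _).le (by positivity)
  · have htrunc := one_sub_exp_neg_pow_ceil_mul_exp_le (x := x ^ α) ht htT
    have hq : (1 - exp (-t)) ^ ⌈x ^ α⌉₊ ≤ (1 - exp (-t)) ^ ⌈x ^ α⌉₊ * exp t :=
      le_mul_of_one_le_right (pow_nonneg (sub_nonneg.2 (exp_le_one_iff.2 (by linarith))) _)
        (one_le_exp ht.le)
    have hE : 0 ≤ exp T * exp (-(-log (1 - exp (-T)) * x ^ α)) := by positivity
    nlinarith [mul_le_mul_of_nonneg_left (hq.trans htrunc) (by positivity : (0 : ℝ) ≤ x),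
      mul_le_mul_of_nonneg_right (show x ≤ 32 * x ^ 2 by nlinarith) hE]

lemma four_le_mul_of_max_le {t η x : ℝ} (ht : 0 ≤ t) (hη : 0 < η)
    (hx : max (8 * (2 * exp (2 * t) - exp t) / η ^ 2) 2 ≤ x) : 4 ≤ x * η := by
  have hC : 1 ≤ 2 * exp (2 * t) - exp t := by
    have := one_le_exp ht
    rw [two_mul t, exp_add]; nlinarith
  have h8 : 8 ≤ x * η ^ 2 := by
    have := (le_max_left _ _).trans hx
    rw [div_le_iff₀ (by positivity)] at this; nlinarith
  have hx2 : 2 ≤ x := (le_max_right _ _).trans hx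
  nlinarith [sq_nonneg (x * η - 4), mul_pos (by linarith : 0 < x) hη]

lemma truncation_bias_le_of_tail_lt_one {t T η α x : ℝ} (ht : 0 < t) (htT : t ≤ T) (hη : 0 < η)
    (hx : max (8 * (2 * exp (2 * t) - exp t) / η ^ 2) 2 ≤ x)
    (htail : 32 * exp T * x ^ 2 * exp (-(-log (1 - exp (-T)) * x ^ α)) < 1) :
    2 * x * ((1 - exp (-t)) ^ ⌈x ^ α⌉₊ * exp t) ≤ x * η := by
  have hbias := one_sub_exp_neg_pow_ceil_mul_exp_le (x := x ^ α) ht htT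
  have hx1 : 2 ≤ x := (le_max_right _ _).trans hx
  have hx2 : 2 * x ≤ 32 * x ^ 2 := by nlinarith
  -- the bias `x (1 - e^{-t})^K e^t` is below `1 / (32 x)`, while `x η ≥ 4`
  nlinarith [four_le_mul_of_max_le ht.le hη hx,
    mul_le_mul_of_nonneg_left hbias (by linarith : (0 : ℝ) ≤ 2 * x),
    mul_le_mul_of_nonneg_right hx2 (by positivity :
      (0 : ℝ) ≤ exp T * exp (-(-log (1 - exp (-T)) * x ^ α)))]

theorem gamma_bmp_population_size_bound_general
    {Ω : Type*} [MeasurableSpace Ω] (μ : Measure Ω) [IsProbabilityMeasure μ]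
    (t T : ℝ) (ht : 0 < t) (htT : t ≤ T) (n : ℕ)
    (M : Fin n → Ω → ℕ) (χ : Fin n → Ω → ℝ → ℕ) (G : ℝ → ℝ)
    (hMmeas : ∀ i, Measurable (M i))
    (hχmeas : ∀ i r, Measurable fun ω => χ i ω r)
    (hindep : iIndepFun (fun i ω => (M i ω, χ i ω)) μ)
    (hlaw : ∀ i, ∀ k : ℕ, 1 ≤ k →
      μ {ω | M i ω = k} = ENNReal.ofReal (Real.exp (-t) * (1 - Real.exp (-t)) ^ (k - 1)))
    (hanti : ∀ i ω, Antitone (χ i ω))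
    (hbd : ∀ i ω r, χ i ω r ≤ M i ω)
    (hG : ∀ i r, G r = ∫ ω, (χ i ω r : ℝ) ∂μ)
    (hGlim : Tendsto G atBot (nhds 1))
    (η : ℝ) (hη : 0 < η) (α : ℝ) (hα : α ∈ Set.Ioo (0:ℝ) (1/2))
    (hn : max (8 * (2 * Real.exp (2 * t) - Real.exp t) / η ^ 2) 2 ≤ (n : ℝ)) :
    μ {ω | (n : ℝ) * η < |(((∑ i, ⨆ r : ℝ, χ i ω r) : ℕ) : ℝ) - (n : ℝ)|}
      ≤ ENNReal.ofReal
          (16 * (n : ℝ) ^ 2 * Real.exp (-((n : ℝ) ^ ((1:ℝ) - 2 * α) * η ^ 2 / 32))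
            + 32 * Real.exp T * (n : ℝ) ^ 2 *
                Real.exp (-(-Real.log (1 - Real.exp (-T)) * (n : ℝ) ^ α))) := by
  set q := 1 - exp (-t) with hq
  have hq0 : 0 ≤ q := sub_nonneg.2 (exp_le_one_iff.2 (by linarith))
  have hq1 : q < 1 := sub_lt_self _ (exp_pos _)
  have hsup (i : Fin n) (ω : Ω) : ⨆ r, χ i ω r = ⨆ k : ℕ, χ i ω (-k) :=
    (hanti i ω).iSup_eq_iSup_neg_natCast
  simp_rw [hsup]
  have htailM (i : Fin n) (j : ℕ) : μ {ω | j < M i ω} ≤ ENNReal.ofReal (q ^ j) :=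
    measure_lt_le_of_geometric (hMmeas i) (exp_pos _).le (exp_le_one_iff.2 (by linarith))
      (hlaw i) j
  have hmean (i : Fin n) : ∫ ω, ((⨆ k : ℕ, χ i ω (-k) : ℕ) : ℝ) ∂μ = 1 :=
    integral_natCast_iSup_neg_natCast_eq_of_tendsto_atBot (hχmeas i) (hanti i)
      (integrable_natCast_of_measure_lt_le_geometric (hMmeas i) hq0 hq1 (htailM i)) (hbd i)
      (hGlim.congr (hG i))
  have htail (i : Fin n) (j : ℕ) :
      μ {ω | j < ⨆ k : ℕ, χ i ω (-k)} ≤ ENNReal.ofReal (q ^ j) :=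
    (measure_mono fun ω (h : j < _) => h.trans_le (ciSup_le fun k => hbd i ω _)).trans (htailM i j)
  have key := measure_abs_sum_sub_card_gt_le (μ := μ) (fun i => by fun_prop)
    (hindep.comp (fun _ x => ⨆ k : ℕ, x.2 (-k)) fun _ => by fun_prop) hq0 hq1 htail hmean
    ⌈(n : ℝ) ^ α⌉₊ (s := n * η)
  have h1q : (1 - q)⁻¹ = exp t := by rw [hq, sub_sub_cancel, exp_neg, inv_inv]
  rw [Fintype.card_fin, h1q] at key
  rcases le_or_gt 1 (32 * exp T * n ^ 2 * exp (-(-log (1 - exp (-T)) * (n : ℝ) ^ α)))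
    with hbig | hsmall
  · exact prob_le_one.trans (ENNReal.one_le_ofReal.2 (hbig.trans (le_add_of_nonneg_left
      (by positivity))))
  refine (key ?_).trans (ENNReal.ofReal_le_ofReal
    (exp_decay_add_tail_le ht htT hα.1.le ((le_max_right _ _).trans hn)))
  exact truncation_bias_le_of_tail_lt_one ht htT hη hn hsmall

/-- control of the total population size of the γ-BMP
(Corollary 2.3 of the paper, abstract version). Here `S i ω = ⨆ r, χ i ω r` is
the total count of the `i`-th family and `N_tot = ∑ i, S i`. -/
theorem gamma_bmp_population_size_bound
    {Ω : Type*} [MeasurableSpace Ω] (μ : Measure Ω) [IsProbabilityMeasure μ]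
    (t T : ℝ) (ht : 0 < t) (htT : t ≤ T) (n : ℕ)
    (M : Fin n → Ω → ℕ) (χ : Fin n → Ω → ℝ → ℕ) (G : ℝ → ℝ)
    (hMmeas : ∀ i, Measurable (M i))
    (hχmeas : ∀ i r, Measurable fun ω => χ i ω r)
    (hiid : ∀ i j, IdentDistrib (fun ω => (M i ω, χ i ω)) (fun ω => (M j ω, χ j ω)) μ μ)
    (hindep : iIndepFun (fun i ω => (M i ω, χ i ω)) μ)
    (hlaw : ∀ i, ∀ k : ℕ, 1 ≤ k →
      μ {ω | M i ω = k} = ENNReal.ofReal (Real.exp (-t) * (1 - Real.exp (-t)) ^ (k - 1)))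
    (hanti : ∀ i ω, Antitone (χ i ω))
    (hrc : ∀ i ω r, ContinuousWithinAt (χ i ω) (Set.Ici r) r)
    (hbd : ∀ i ω r, χ i ω r ≤ M i ω)
    (hG : ∀ i r, G r = ∫ ω, (χ i ω r : ℝ) ∂μ)
    (hGlim : Tendsto G atBot (nhds 1))
    (η : ℝ) (hη : 0 < η) (α : ℝ) (hα : α ∈ Set.Ioo (0:ℝ) (1/2))
    (hn : max (8 * (2 * Real.exp (2 * t) - Real.exp t) / η ^ 2) 2 ≤ (n : ℝ)) :
    μ {ω | (n : ℝ) * η < |(((∑ i, ⨆ r : ℝ, χ i ω r) : ℕ) : ℝ) - (n : ℝ)|}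
      ≤ ENNReal.ofReal
          (16 * (n : ℝ) ^ 2 * Real.exp (-((n : ℝ) ^ ((1:ℝ) - 2 * α) * η ^ 2 / 32))
            + 32 * Real.exp T * (n : ℝ) ^ 2 *
                Real.exp (-(-Real.log (1 - Real.exp (-T)) * (n : ℝ) ^ α))) :=
  gamma_bmp_population_size_bound_general μ t T ht htT n M χ G hMmeas hχmeas hindep hlaw hanti hbd
    hG hGlim η hη α hα hn
end
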